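/- arXiv:2507.14068 — 3 statements merged into one kernel-verified Lean document; each statement's English description precedes it below -/
import Mathlib

section
/- Let L be a finite G-lattice and let T be a join-irreducible element of the lattice Tr(L) of transfer systems on L. Then T = ⌊x → y⌋ for some x, y ∈ L with x < y. -/
/-- A transfer system on a `G`-lattice `L`: a partial order refining `≤`,
closed under the `G`-action and under restriction. -/
structure TransferSystem (G L : Type*) [Group G] [Lattice L] [MulAction G L] : Type _ where
  rel : L → L → Prop
  refl : ∀ x, rel x x
  trans : ∀ {x y z}, rel x y → rel y z → rel x z
  le_of_rel : ∀ {x y}, rel x y → x ≤ y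
  smul_rel : ∀ (g : G) {x y}, rel x y → rel (g • x) (g • y)
  restrict : ∀ {x y x'}, rel x y → x' ≤ y → rel (x ⊓ x') x'

namespace TransferSystem

variable {G L : Type*} [Group G] [Lattice L] [MulAction G L]
  [CovariantClass G L (· • ·) (· ≤ ·)]

theorem ext' {S T : TransferSystem G L} (h : S.rel = T.rel) : S = T := by
  cases S; cases T; simpa using h

instance : PartialOrder (TransferSystem G L) where
  le S T := ∀ ⦃x y : L⦄, S.rel x y → T.rel x y
  le_refl S := fun _ _ h => h
  le_trans S T U h1 h2 := fun _ _ h => h2 (h1 h)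
  le_antisymm S T h1 h2 :=
    ext' (by funext x y; exact propext ⟨fun h => h1 h, fun h => h2 h⟩)

lemma smul_mono' (g : G) {x y : L} (h : x ≤ y) : g • x ≤ g • y :=
  CovariantClass.elim g h

/-- The intersection of a set of transfer systems. -/
def sInfTS (s : Set (TransferSystem G L)) : TransferSystem G L where
  rel x y := x ≤ y ∧ ∀ T ∈ s, T.rel x y
  refl x := ⟨le_refl x, fun T _ => T.refl x⟩
  trans h1 h2 := ⟨h1.1.trans h2.1, fun T hT => T.trans (h1.2 T hT) (h2.2 T hT)⟩
  le_of_rel h := h.1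
  smul_rel g _ _ h := ⟨smul_mono' g h.1, fun T hT => T.smul_rel g (h.2 T hT)⟩
  restrict h hle := ⟨inf_le_right, fun T hT => T.restrict (h.2 T hT) hle⟩

instance : InfSet (TransferSystem G L) := ⟨sInfTS⟩

theorem sInf_rel (s : Set (TransferSystem G L)) (x y : L) :
    (sInf s).rel x y ↔ x ≤ y ∧ ∀ T ∈ s, T.rel x y := Iff.rfl

/-- The lattice of transfer systems, ordered by refinement. -/
instance : CompleteLattice (TransferSystem G L) :=
  completeLatticeOfInf _ (fun s =>
    ⟨fun T hT _ _ h => h.2 T hT,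
     fun T hT _ _ h => ((sInf_rel s _ _).2 ⟨T.le_of_rel h, fun S hS => hT hS h⟩)⟩)

/-- `⌊x → y⌋`, the smallest transfer system containing the pair `(x, y)`. -/
def gen (x y : L) : TransferSystem G L := sInf {T : TransferSystem G L | T.rel x y}

end TransferSystem

/-!
Every transfer system is the join of the generated systems `⌊x → y⌋` over its finitely many
nontrivial arrows `x → y`; a join-irreducible element of `Tr(L)` must equal one of the joinands.
-/

namespace TransferSystem

variable {G L : Type*} [Group G] [Lattice L] [MulAction G L]
  [CovariantClass G L (· • ·) (· ≤ ·)]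

lemma gen_le_of_rel {T : TransferSystem G L} {x y : L} (h : T.rel x y) : gen x y ≤ T :=
  sInf_le h

lemma rel_gen_self {x y : L} (h : x ≤ y) : (gen (G := G) x y).rel x y :=
  (sInf_rel _ x y).2 ⟨h, fun _ hS => hS⟩

lemma exists_finset_sup_gen_eq [Finite L] (T : TransferSystem G L) :
    ∃ s : Finset (L × L), (∀ p ∈ s, p.1 < p.2 ∧ T.rel p.1 p.2) ∧
      s.sup (fun p => gen p.1 p.2) = T := by
  let arrows : Set (L × L) := {p | p.1 < p.2 ∧ T.rel p.1 p.2}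
  have hfin : arrows.Finite := arrows.toFinite
  refine ⟨hfin.toFinset, fun p hp => hfin.mem_toFinset.1 hp, le_antisymm ?_ fun x y h => ?_⟩
  · exact Finset.sup_le fun p hp => gen_le_of_rel (hfin.mem_toFinset.1 hp).2
  rcases (T.le_of_rel h).eq_or_lt with rfl | hlt
  · exact TransferSystem.refl _ x
  · have hle : gen (G := G) x y ≤ hfin.toFinset.sup (fun p => gen p.1 p.2) :=
      Finset.le_sup (f := fun p => gen p.1 p.2) (b := (x, y)) (hfin.mem_toFinset.2 ⟨hlt, h⟩)
    exact hle (rel_gen_self hlt.le)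

end TransferSystem

theorem supIrred_eq_gen_general {G L : Type*} [Group G] [Lattice L] [Finite L]
    [MulAction G L] [CovariantClass G L (· • ·) (· ≤ ·)]
    (T : TransferSystem G L) (hT : SupIrred T) :
    ∃ x y : L, x < y ∧ T = TransferSystem.gen x y := by
  obtain ⟨s, hs, hsup⟩ := T.exists_finset_sup_gen_eq
  obtain ⟨p, hp, hpT⟩ := hT.finset_sup_eq hsup
  exact ⟨p.1, p.2, (hs p hp).1, hpT.symm⟩

/-- Every join-irreducible element of `Tr(L)` is of the form `⌊x → y⌋`
for some `x < y`. -/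
theorem supIrred_eq_gen {G L : Type*} [Group G] [Finite G] [Lattice L] [Finite L]
    [MulAction G L] [CovariantClass G L (· • ·) (· ≤ ·)]
    (T : TransferSystem G L) (hT : SupIrred T) :
    ∃ x y : L, x < y ∧ T = TransferSystem.gen x y :=
  supIrred_eq_gen_general T hT
end

section
/- Let L be a finite G-lattice. Then the set of meet-irreducible elements of Tr(L) is exactly {⌈x → y⌉^⊠ : x, y ∈ L, x < y}, and the map ⌊x → y⌋ ↦ ⌈x → y⌉^⊠ is a well-defined bijection from the set of join-irreducible elements of Tr(L) to the set of meet-irreducible elements of Tr(L). In particular, the number of meet-irreducible elements of Tr(L) equals the number of G-orbits of pairs (x, y) ∈ L × L with x < y under the diagonal action g·(x, y) = (g·x, g·y). -/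
/-- A cotransfer system on a `G`-lattice `L`: a partial order refining `≤`,
closed under the `G`-action and under corestriction. -/
structure CoTransferSystem (G L : Type*) [Group G] [Lattice L] [MulAction G L] : Type _ where
  rel : L → L → Prop
  refl : ∀ x, rel x x
  trans : ∀ {x y z}, rel x y → rel y z → rel x z
  le_of_rel : ∀ {x y}, rel x y → x ≤ y
  smul_rel : ∀ (g : G) {x y}, rel x y → rel (g • x) (g • y)
  corestrict : ∀ {x y y'}, rel x y → x ≤ y' → rel y' (y ⊔ y')

namespace CoTransferSystem

variable {G L : Type*} [Group G] [Lattice L] [MulAction G L]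
  [CovariantClass G L (· • ·) (· ≤ ·)]

theorem ext' {S T : CoTransferSystem G L} (h : S.rel = T.rel) : S = T := by
  cases S; cases T; simpa using h

/-- Cotransfer systems are ordered by refinement. -/
instance : PartialOrder (CoTransferSystem G L) where
  le S T := ∀ ⦃x y : L⦄, S.rel x y → T.rel x y
  le_refl S := fun _ _ h => h
  le_trans S T U h1 h2 := fun _ _ h => h2 (h1 h)
  le_antisymm S T h1 h2 :=
    ext' (by funext x y; exact propext ⟨fun h => h1 h, fun h => h2 h⟩)

/-- `⌈x → y⌉`, the smallest cotransfer system containing the pair `(x, y)`. -/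
def gen (x y : L) : CoTransferSystem G L where
  rel a b := a ≤ b ∧ ∀ C : CoTransferSystem G L, C.rel x y → C.rel a b
  refl a := ⟨le_refl a, fun C _ => C.refl a⟩
  trans h1 h2 := ⟨h1.1.trans h2.1, fun C hC => C.trans (h1.2 C hC) (h2.2 C hC)⟩
  le_of_rel h := h.1
  smul_rel g _ _ h :=
    ⟨TransferSystem.smul_mono' g h.1, fun C hC => C.smul_rel g (h.2 C hC)⟩
  corestrict h hle := ⟨le_sup_right, fun C hC => C.corestrict (h.2 C hC) hle⟩

end CoTransferSystem

/-- `C^⊠`: the pairs `(a, b)` with `a ≤ b` having the right lifting property with respect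
to every pair of `C`. -/
def rlpRel {G L : Type*} [Group G] [Lattice L] [MulAction G L]
    (C : CoTransferSystem G L) : L → L → Prop :=
  fun a b => a ≤ b ∧ ∀ ⦃x y : L⦄, C.rel x y → x ≤ a → y ≤ b → y ≤ a

/-- The orbit equivalence relation for the diagonal `G`-action on the set of
nontrivial relations `{(x, y) : x < y}` in `L`. -/
def pairOrbitSetoid (G L : Type*) [Group G] [Lattice L] [MulAction G L] :
    Setoid {p : L × L // p.1 < p.2} where
  r p q := ∃ g : G, g • p.1 = q.1
  iseqv := by
    refine ⟨fun p => ⟨1, one_smul _ _⟩, ?_, ?_⟩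
    · rintro p q ⟨g, hg⟩
      exact ⟨g⁻¹, by rw [← hg, inv_smul_smul]⟩
    · rintro p q r ⟨g, hg⟩ ⟨g', hg'⟩
      exact ⟨g' * g, by rw [mul_smul, hg, hg']⟩

/-!
Write `R(x, y)` for the transfer system of pairs `(a, b)` with the right lifting property against
every translate `g • (x, y)`; it is `⌈x → y⌉^⊠`. A transfer system `T` lies below `R(x, y)` iff it
contains no `c → y` with `x ≤ c < y`, because restricting a pair that fails to lift against
`g • (x, y)` along `g • y` and translating back produces such a `c → y`. Since a finite group
acting by order automorphisms fixes every `a` with `g • a ≤ a`, `R(x, y)` contains `x → c` for all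
`x ≤ c < y`; hence every transfer system strictly above `R(x, y)` contains `x → y`, and every one
strictly below `⌊x → y⌋` lies below `R(x, y)`. So `R(x, y)` is meet-irreducible and `⌊x → y⌋` is
join-irreducible, and both depend exactly on the orbit of `(x, y)`. Conversely every transfer
system is the meet of the `R(x, y)` above it and the join of the `⌊x → y⌋` below it, so in the
finite lattice `Tr(L)` there are no other irreducibles.
-/

theorem infIrred_of_forall_lt_imp_le {α : Type*} [Lattice α] {a b : α} (hba : ¬b ≤ a)
    (h : ∀ c, a < c → b ≤ c) : InfIrred a := by
  refine ⟨fun ha => hba (le_sup_right.trans (ha le_sup_left)), fun c d hcd => ?_⟩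
  by_contra! hne
  have hc : a < c := lt_of_le_of_ne (hcd ▸ inf_le_left) hne.1.symm
  have hd : a < d := lt_of_le_of_ne (hcd ▸ inf_le_right) hne.2.symm
  exact hba (hcd ▸ le_inf (h c hc) (h d hd))

theorem supIrred_of_forall_lt_imp_le {α : Type*} [Lattice α] {a b : α} (hab : ¬a ≤ b)
    (h : ∀ c, c < a → c ≤ b) : SupIrred a :=
  infIrred_toDual.1 <| infIrred_of_forall_lt_imp_le (α := αᵒᵈ) hab fun _ hc => h _ hc

theorem InfIrred.mem_of_sInf_eq {α : Type*} [CompleteLattice α] {a : α} {s : Set α}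
    (ha : InfIrred a) (hs : s.Finite) (h : sInf s = a) : a ∈ s := by
  obtain ⟨b, hb, rfl⟩ := ha.finset_inf_eq (s := hs.toFinset) (f := id)
    (by rwa [Finset.inf_id_eq_sInf, hs.coe_toFinset])
  exact hs.mem_toFinset.1 hb

theorem SupIrred.mem_of_sSup_eq {α : Type*} [CompleteLattice α] {a : α} {s : Set α}
    (ha : SupIrred a) (hs : s.Finite) (h : sSup s = a) : a ∈ s :=
  InfIrred.mem_of_sInf_eq (α := αᵒᵈ) (supIrred_toDual.1 ha) hs h

section Action

variable {G L : Type*} [Group G] [Lattice L] [MulAction G L]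
  [CovariantClass G L (· • ·) (· ≤ ·)]

theorem smul_le_smul_iff_of_group {g : G} {a b : L} : g • a ≤ g • b ↔ a ≤ b :=
  ⟨fun h => by simpa using smul_le_smul_left g⁻¹ h, smul_le_smul_left g⟩

theorem smul_le_smul_iff_inv_mul_smul_le {g h : G} {a b : L} :
    g • a ≤ h • b ↔ (h⁻¹ * g) • a ≤ b := by
  rw [← smul_le_smul_iff_of_group (g := h⁻¹), inv_smul_smul, smul_smul]

theorem smul_sup_of_group (g : G) (a b : L) : g • (a ⊔ b) = g • a ⊔ g • b :=
  OrderIso.map_sup ⟨MulAction.toPerm g, smul_le_smul_iff_of_group⟩ a b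

theorem smul_eq_of_smul_le_of_smul_le [Finite G] {g h : G} {a b : L} (hab : g • a ≤ b)
    (hba : h • b ≤ a) : g • a = b := by
  have hfix : (g * h) • b = b :=
    smul_eq_of_smul_le <| by rw [mul_smul]; exact (smul_le_smul_left g hba).trans hab
  refine le_antisymm hab ?_
  calc b = g • h • b := by rw [smul_smul, hfix]
    _ ≤ g • a := smul_le_smul_left g hba

theorem exists_smul_pair_eq [Finite G] {x y x' y' : L} (h : ∃ g : G, g • x ≤ x' ∧ g • y ≤ y')
    (h' : ∃ g : G, g • x' ≤ x ∧ g • y' ≤ y) : ∃ g : G, g • (x, y) = (x', y') := by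
  obtain ⟨g, hx, hy⟩ := h
  obtain ⟨k, hx', hy'⟩ := h'
  exact ⟨g, Prod.ext (smul_eq_of_smul_le_of_smul_le hx hx')
    (smul_eq_of_smul_le_of_smul_le hy hy')⟩

end Action

namespace TransferSystem

variable {G L : Type*} [Group G] [Lattice L] [MulAction G L] {T : TransferSystem G L} {x y : L}

theorem smul_rel_smul_iff (g : G) {a b : L} : T.rel (g • a) (g • b) ↔ T.rel a b :=
  ⟨fun h => by simpa using T.smul_rel g⁻¹ h, T.smul_rel g⟩

theorem exists_mem_Ico_rel {u v : L} (hxy : x ≤ y) (huv : T.rel u v) (hxu : x ≤ u)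
    (hyv : y ≤ v) (hyu : ¬y ≤ u) : ∃ c ∈ Set.Ico x y, T.rel c y :=
  ⟨u ⊓ y, ⟨le_inf hxu hxy, inf_le_right.lt_of_not_ge fun h => hyu (h.trans inf_le_left)⟩,
    T.restrict huv hyv⟩

variable [CovariantClass G L (· • ·) (· ≤ ·)]

instance [Finite L] : Finite (TransferSystem G L) :=
  Finite.of_injective TransferSystem.rel fun _ _ => ext'

theorem gen_rel (hxy : x ≤ y) : (gen (G := G) x y).rel x y :=
  (sInf_rel _ _ _).2 ⟨hxy, fun _ hT => hT⟩

theorem gen_le_iff (hxy : x ≤ y) : gen x y ≤ T ↔ T.rel x y :=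
  ⟨fun h => h (gen_rel hxy), fun h => sInf_le h⟩

theorem gen_smul (g : G) (x y : L) : gen (G := G) (g • x) (g • y) = gen x y := by
  simp only [gen, smul_rel_smul_iff]

/-- `R(x, y)`; `rlpRel_coGen` identifies it with `⌈x → y⌉^⊠`. -/
def rlpOf (x y : L) : TransferSystem G L where
  rel a b := a ≤ b ∧ ∀ g : G, g • x ≤ a → g • y ≤ b → g • y ≤ a
  refl a := ⟨le_rfl, fun _ _ h => h⟩
  trans := fun ⟨hab, H⟩ ⟨hbc, H'⟩ =>
    ⟨hab.trans hbc, fun g hx hy => H g hx (H' g (hx.trans hab) hy)⟩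
  le_of_rel h := h.1
  smul_rel h a b := fun ⟨hab, H⟩ => ⟨smul_le_smul_left h hab, fun g hx hy => by
    rw [smul_le_smul_iff_inv_mul_smul_le] at hx hy ⊢
    exact H _ hx hy⟩
  restrict := fun ⟨_, H⟩ hx'y => ⟨inf_le_right, fun g hx hy =>
    le_inf (H g (hx.trans inf_le_left) (hy.trans hx'y)) hy⟩

theorem rlpOf_smul (g : G) (x y : L) : rlpOf (G := G) (g • x) (g • y) = rlpOf x y := by
  refine ext' (funext₂ fun a b => propext (and_congr_right fun _ => ?_))
  simp only [smul_smul]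
  exact (Equiv.mulRight g).forall_congr_right
    (q := fun k : G => k • x ≤ a → k • y ≤ b → k • y ≤ a)

theorem not_rlpOf_rel_self (hxy : x < y) : ¬(rlpOf (G := G) x y).rel x y := fun h =>
  hxy.not_ge (by simpa using h.2 1 (by simp) (by simp))

theorem exists_smul_le_of_not_rlpOf_rel {a b : L} (hab : a ≤ b)
    (h : ¬(rlpOf (G := G) x y).rel a b) : ∃ g : G, g • x ≤ a ∧ g • y ≤ b := by
  by_contra! H
  exact h ⟨hab, fun g hx hy => absurd hy (H g hx)⟩

theorem exists_smul_le_of_gen_rel {a b : L} (hxy : x ≤ y) (h : (gen (G := G) x y).rel a b)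
    (hab : a < b) : ∃ g : G, g • a ≤ x ∧ g • b ≤ y :=
  exists_smul_le_of_not_rlpOf_rel hxy fun hR =>
    not_rlpOf_rel_self hab ((gen_le_iff hxy).2 hR h)

theorem le_rlpOf_iff (hxy : x ≤ y) : T ≤ rlpOf x y ↔ ∀ c ∈ Set.Ico x y, ¬T.rel c y := by
  refine ⟨fun h c hc hcy => ?_, fun h u v huv => ⟨T.le_of_rel huv, fun g hx hy => ?_⟩⟩
  · exact hc.2.not_ge (by simpa using (h hcy).2 (1 : G) (by simpa using hc.1) (by simp))
  · by_contra hyu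
    rw [← smul_le_smul_iff_of_group (g := g⁻¹), inv_smul_smul] at hx hy hyu
    obtain ⟨c, hc, hcy⟩ := exists_mem_Ico_rel hxy (T.smul_rel g⁻¹ huv) hx hy hyu
    exact h c hc hcy

theorem gen_not_le_rlpOf (hxy : x < y) : ¬gen x y ≤ rlpOf (G := G) x y := by
  rw [gen_le_iff hxy.le]
  exact not_rlpOf_rel_self hxy

section FiniteGroup

variable [Finite G]

theorem rlpOf_rel_of_mem_Ico {c : L} (hc : c ∈ Set.Ico x y) : (rlpOf (G := G) x y).rel x c :=
  ⟨hc.1, fun g _ hyc => by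
    rw [smul_eq_of_smul_le (hyc.trans hc.2.le)] at hyc
    exact absurd hyc hc.2.not_ge⟩

theorem rel_of_rlpOf_lt (hxy : x < y) (h : rlpOf x y < T) : T.rel x y := by
  obtain ⟨c, hc, hcy⟩ : ∃ c ∈ Set.Ico x y, T.rel c y := by
    simpa [le_rlpOf_iff hxy.le, and_assoc] using h.not_ge
  exact T.trans (h.le (rlpOf_rel_of_mem_Ico hc)) hcy

theorem infIrred_rlpOf (hxy : x < y) : InfIrred (rlpOf (G := G) x y) :=
  infIrred_of_forall_lt_imp_le (gen_not_le_rlpOf hxy) fun _ h =>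
    (gen_le_iff hxy.le).2 (rel_of_rlpOf_lt hxy h)

theorem eq_of_gen_rel_of_mem_Ico {c : L} (hc : c ∈ Set.Ico x y)
    (h : (gen (G := G) x y).rel c y) : c = x := by
  obtain ⟨g, hgc, -⟩ := exists_smul_le_of_gen_rel (hc.1.trans hc.2.le) h hc.2
  rw [smul_eq_of_smul_le (hgc.trans hc.1)] at hgc
  exact le_antisymm hgc hc.1

theorem le_rlpOf_of_lt_gen (hxy : x < y) (h : T < gen x y) : T ≤ rlpOf x y :=
  (le_rlpOf_iff hxy.le).2 fun c hc hcy => by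
    obtain rfl := eq_of_gen_rel_of_mem_Ico hc (h.le hcy)
    exact h.not_ge ((gen_le_iff hxy.le).2 hcy)

theorem supIrred_gen (hxy : x < y) : SupIrred (gen (G := G) x y) :=
  supIrred_of_forall_lt_imp_le (gen_not_le_rlpOf hxy) fun _ h => le_rlpOf_of_lt_gen hxy h

end FiniteGroup

theorem sSup_gen_eq (T : TransferSystem G L) :
    sSup {J | ∃ x y, x < y ∧ T.rel x y ∧ J = gen x y} = T := by
  set S : Set (TransferSystem G L) := {J | ∃ x y, x < y ∧ T.rel x y ∧ J = gen x y}
  refine le_antisymm (sSup_le ?_) fun u v h => ?_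
  · rintro _ ⟨x, y, hxy, h, rfl⟩
    exact (gen_le_iff hxy.le).2 h
  · rcases (T.le_of_rel h).lt_or_eq with huv | rfl
    · exact le_sSup (s := S) ⟨u, v, huv, h, rfl⟩ (gen_rel huv.le)
    · exact refl _ u

section FiniteLattice

variable [Finite L]

/-- The witness: `y ≤ v` minimal with `u ⊓ y → y` missing from `T`, and `x = u ⊓ y`. -/
theorem exists_le_rlpOf_not_rel {u v : L} (huv : u ≤ v) (h : ¬T.rel u v) :
    ∃ x y, x < y ∧ T ≤ rlpOf x y ∧ ¬(rlpOf (G := G) x y).rel u v := by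
  obtain ⟨y, hyv, hmin⟩ := exists_minimal_le_of_wellFoundedLT (fun z => ¬T.rel (u ⊓ z) z) v
    (by rwa [inf_eq_left.2 huv])
  have hxy : u ⊓ y < y :=
    inf_le_right.lt_of_ne fun e => hmin.prop (by rw [e]; exact T.refl y)
  refine ⟨u ⊓ y, y, hxy, (le_rlpOf_iff hxy.le).2 fun c hc hcy => ?_, fun hR => ?_⟩
  · have hcu : u ⊓ c = u ⊓ y :=
      le_antisymm (inf_le_inf_left u hc.2.le) (le_inf inf_le_left hc.1)
    have hc_bad : ¬T.rel (u ⊓ c) c := fun hxc => hmin.prop (T.trans (hcu ▸ hxc) hcy)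
    exact hc.2.not_ge (hmin.le_of_le hc_bad hc.2.le)
  · have hyu : y ≤ u := by simpa using hR.2 (1 : G) (by simp) (by simpa using hyv)
    exact hxy.ne (inf_eq_right.2 hyu)

theorem sInf_rlpOf_eq (T : TransferSystem G L) :
    sInf {R | ∃ x y, x < y ∧ T ≤ rlpOf x y ∧ R = rlpOf x y} = T := by
  refine le_antisymm (fun u v h => ?_) (le_sInf ?_)
  · by_contra hT
    obtain ⟨x, y, hxy, hle, hR⟩ := exists_le_rlpOf_not_rel (le_of_rel _ h) hT
    exact hR (((sInf_rel _ u v).1 h).2 (rlpOf x y) ⟨x, y, hxy, hle, rfl⟩)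
  · rintro _ ⟨x, y, -, hle, rfl⟩
    exact hle

theorem infIrred_iff_exists_eq_rlpOf [Finite G] :
    InfIrred T ↔ ∃ x y, x < y ∧ T = rlpOf x y := by
  refine ⟨fun hT => ?_, fun ⟨x, y, hxy, hT⟩ => hT ▸ infIrred_rlpOf hxy⟩
  obtain ⟨x, y, hxy, -, hT'⟩ := hT.mem_of_sInf_eq (Set.toFinite _) (sInf_rlpOf_eq T)
  exact ⟨x, y, hxy, hT'⟩

theorem supIrred_iff_exists_eq_gen [Finite G] :
    SupIrred T ↔ ∃ x y, x < y ∧ T = gen x y := by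
  refine ⟨fun hT => ?_, fun ⟨x, y, hxy, hT⟩ => hT ▸ supIrred_gen hxy⟩
  obtain ⟨x, y, hxy, -, hT'⟩ := hT.mem_of_sSup_eq (Set.toFinite _) (sSup_gen_eq T)
  exact ⟨x, y, hxy, hT'⟩

end FiniteLattice

end TransferSystem

namespace CoTransferSystem

variable {G L : Type*} [Group G] [Lattice L] [MulAction G L]
  [CovariantClass G L (· • ·) (· ≤ ·)]

def llpOf (a b : L) : CoTransferSystem G L where
  rel u v := u ≤ v ∧ ∀ g : G, g • u ≤ a → g • v ≤ b → g • v ≤ a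
  refl u := ⟨le_rfl, fun _ h _ => h⟩
  trans := fun ⟨huv, H⟩ ⟨hvw, H'⟩ =>
    ⟨huv.trans hvw, fun g hu hw => H' g (H g hu ((smul_le_smul_left g hvw).trans hw)) hw⟩
  le_of_rel h := h.1
  smul_rel h u v := fun ⟨huv, H⟩ => ⟨smul_le_smul_left h huv, fun g hu hv => by
    rw [smul_smul] at hu hv ⊢
    exact H _ hu hv⟩
  corestrict := fun ⟨_, H⟩ huy => ⟨le_sup_right, fun g hy hvy => by
    rw [smul_sup_of_group] at hvy ⊢
    exact sup_le (H g ((smul_le_smul_left g huy).trans hy) (le_sup_left.trans hvy)) hy⟩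

theorem gen_rel_smul {x y : L} (hxy : x ≤ y) (g : G) :
    (gen (G := G) x y).rel (g • x) (g • y) :=
  ⟨smul_le_smul_left g hxy, fun C hC => C.smul_rel g hC⟩

end CoTransferSystem

open TransferSystem

theorem rlpRel_coGen {G L : Type*} [Group G] [Lattice L] [MulAction G L]
    [CovariantClass G L (· • ·) (· ≤ ·)] {x y : L} (hxy : x ≤ y) :
    rlpRel (CoTransferSystem.gen (G := G) x y) = (rlpOf (G := G) x y).rel := by
  refine funext₂ fun a b => propext ⟨fun ⟨hab, H⟩ => ⟨hab, fun g hx hy => ?_⟩,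
    fun ⟨hab, H⟩ => ⟨hab, fun u v huv hu hv => ?_⟩⟩
  · exact H (CoTransferSystem.gen_rel_smul hxy g) hx hy
  · have := (huv.2 (CoTransferSystem.llpOf a b) ⟨hxy, H⟩).2 (1 : G)
    simpa using this (by simpa using hu) (by simpa using hv)

section Orbits

variable {G L : Type*} [Group G] [Finite G] [Lattice L] [MulAction G L]
  [CovariantClass G L (· • ·) (· ≤ ·)]

theorem pairOrbit_iff_rlpOf_eq {p q : {p : L × L // p.1 < p.2}} :
    pairOrbitSetoid G L p q ↔ rlpOf (G := G) p.1.1 p.1.2 = rlpOf q.1.1 q.1.2 := by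
  obtain ⟨⟨x, y⟩, hxy⟩ := p
  obtain ⟨⟨x', y'⟩, hxy'⟩ := q
  refine ⟨fun ⟨g, hg⟩ => ?_, fun h => exists_smul_pair_eq ?_ ?_⟩
  · obtain ⟨rfl, rfl⟩ := Prod.ext_iff.1 hg
    exact (rlpOf_smul g x y).symm
  · exact exists_smul_le_of_not_rlpOf_rel hxy'.le (h ▸ not_rlpOf_rel_self hxy')
  · exact exists_smul_le_of_not_rlpOf_rel hxy.le (h ▸ not_rlpOf_rel_self hxy)

theorem pairOrbit_iff_gen_eq {p q : {p : L × L // p.1 < p.2}} :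
    pairOrbitSetoid G L p q ↔ gen (G := G) p.1.1 p.1.2 = gen q.1.1 q.1.2 := by
  obtain ⟨⟨x, y⟩, hxy⟩ := p
  obtain ⟨⟨x', y'⟩, hxy'⟩ := q
  refine ⟨fun ⟨g, hg⟩ => ?_, fun h => exists_smul_pair_eq ?_ ?_⟩
  · obtain ⟨rfl, rfl⟩ := Prod.ext_iff.1 hg
    exact (gen_smul g x y).symm
  · exact exists_smul_le_of_gen_rel hxy'.le (h ▸ gen_rel hxy.le) hxy
  · exact exists_smul_le_of_gen_rel hxy.le (h.symm ▸ gen_rel hxy'.le) hxy'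

variable [Finite L]

noncomputable def pairOrbitEquivInfIrred :
    Quotient (pairOrbitSetoid G L) ≃ {T : TransferSystem G L // InfIrred T} :=
  (Quotient.congrRight fun _ _ => by
    rw [Setoid.ker_def, Subtype.ext_iff]; exact pairOrbit_iff_rlpOf_eq).trans
    (Setoid.quotientKerEquivOfSurjective (fun p => ⟨rlpOf p.1.1 p.1.2, infIrred_rlpOf p.2⟩)
      fun ⟨_, hT⟩ =>
        let ⟨x, y, hxy, hT⟩ := infIrred_iff_exists_eq_rlpOf.1 hT
        ⟨⟨(x, y), hxy⟩, Subtype.ext hT.symm⟩)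

noncomputable def pairOrbitEquivSupIrred :
    Quotient (pairOrbitSetoid G L) ≃ {T : TransferSystem G L // SupIrred T} :=
  (Quotient.congrRight fun _ _ => by
    rw [Setoid.ker_def, Subtype.ext_iff]; exact pairOrbit_iff_gen_eq).trans
    (Setoid.quotientKerEquivOfSurjective (fun p => ⟨gen p.1.1 p.1.2, supIrred_gen p.2⟩)
      fun ⟨_, hT⟩ =>
        let ⟨x, y, hxy, hT⟩ := supIrred_iff_exists_eq_gen.1 hT
        ⟨⟨(x, y), hxy⟩, Subtype.ext hT.symm⟩)

end Orbits

/-- The meet-irreducible elements of `Tr(L)` are exactly the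
`⌈x → y⌉^⊠` with `x < y`; the map `⌊x → y⌋ ↦ ⌈x → y⌉^⊠` is a well-defined bijection
from the join-irreducibles to the meet-irreducibles; in particular the number of
meet-irreducibles equals the number of `G`-orbits of pairs `x < y`. -/
theorem infIrred_characterization {G L : Type*} [Group G] [Finite G] [Lattice L] [Finite L]
    [MulAction G L] [CovariantClass G L (· • ·) (· ≤ ·)] :
    ({T : TransferSystem G L | InfIrred T} =
        {T : TransferSystem G L | ∃ x y : L, x < y ∧
          T.rel = rlpRel (CoTransferSystem.gen (G := G) x y)}) ∧
    (∃ F : {T : TransferSystem G L // SupIrred T} → {T : TransferSystem G L // InfIrred T},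
        Function.Bijective F ∧
        ∀ (x y : L) (hxy : x < y) (hT : SupIrred (TransferSystem.gen (G := G) x y)),
          (F ⟨TransferSystem.gen x y, hT⟩).1.rel = rlpRel (CoTransferSystem.gen (G := G) x y)) ∧
    Nat.card {T : TransferSystem G L // InfIrred T} =
      Nat.card (Quotient (pairOrbitSetoid G L)) := by
  let eInf := pairOrbitEquivInfIrred (G := G) (L := L)
  let eSup := pairOrbitEquivSupIrred (G := G) (L := L)
  refine ⟨?_, ⟨eSup.symm.trans eInf, Equiv.bijective _, fun x y hxy hT => ?_⟩,
    Nat.card_congr eInf.symm⟩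
  · ext T
    refine infIrred_iff_exists_eq_rlpOf.trans <|
      exists₂_congr fun x y => and_congr_right fun hxy => ?_
    rw [rlpRel_coGen hxy.le]
    exact ⟨congrArg _, ext'⟩
  · have hpair : eSup.symm ⟨gen x y, hT⟩ = ⟦⟨(x, y), hxy⟩⟧ := eSup.symm_apply_eq.2 (by rfl)
    simp only [Equiv.trans_apply, hpair]
    exact (rlpRel_coGen hxy.le).symm
end

section
/- Let L be a finite G-lattice and let a, b, x, y ∈ L with a < b and x < y. Then ⌊a → b⌋ ⊆ ⌈x → y⌉^⊠ if and only if for every g ∈ G at least one of the following holds: x ≰ g·a, or y ≰ g·b, or y ≤ g·a. -/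
/-!
The right lifting class `C^⊠` of a cotransfer system is a transfer system, so
`⌊a → b⌋ ⊆ ⌈x → y⌉^⊠` just says that `(a, b)` lifts against `⌈x → y⌉`. Dually, the pairs `(p, q)`
against which every translate `(g • a, g • b)` lifts form a cotransfer system, so `(a, b)` lifts
against `⌈x → y⌉` as soon as every translate of `(a, b)` lifts against `(x, y)`.
-/

section SMulOrder

variable {G L : Type*} [Group G] [Lattice L] [MulAction G L]
  [CovariantClass G L (· • ·) (· ≤ ·)] {g : G} {x y : L}

lemma le_smul_iff_inv_smul_le : x ≤ g • y ↔ g⁻¹ • x ≤ y :=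
  ⟨fun h => by simpa using TransferSystem.smul_mono' g⁻¹ h,
    fun h => by simpa using TransferSystem.smul_mono' g h⟩

lemma smul_le_iff_le_inv_smul : g • x ≤ y ↔ x ≤ g⁻¹ • y := by
  rw [le_smul_iff_inv_smul_le, inv_inv]

end SMulOrder

namespace TransferSystem

variable {G L : Type*} [Group G] [Lattice L] [MulAction G L]
  [CovariantClass G L (· • ·) (· ≤ ·)] {a b : L}

lemma gen_rel_self (hab : a ≤ b) : (gen (G := G) a b).rel a b :=
  (sInf_rel _ a b).2 ⟨hab, fun _ hT => hT⟩

lemma gen_le_iff_s7 {T : TransferSystem G L} (hab : a ≤ b) : gen a b ≤ T ↔ T.rel a b :=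
  ⟨fun h => h (gen_rel_self hab), fun hT => sInf_le hT⟩

end TransferSystem

namespace CoTransferSystem

variable {G L : Type*} [Group G] [Lattice L] [MulAction G L]
  [CovariantClass G L (· • ·) (· ≤ ·)] {x y : L}

lemma gen_rel_self (hxy : x ≤ y) : (gen (G := G) x y).rel x y :=
  ⟨hxy, fun _ hC => hC⟩

lemma gen_le {C : CoTransferSystem G L} (hC : C.rel x y) : gen x y ≤ C :=
  fun _ _ h => h.2 C hC

def rlp (C : CoTransferSystem G L) : TransferSystem G L where
  rel := rlpRel C
  refl _ := ⟨le_rfl, fun _ _ _ _ hq => hq⟩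
  trans := by
    rintro u v w ⟨huv, hu⟩ ⟨hvw, hv⟩
    refine ⟨huv.trans hvw, fun p q hpq hpu hqw => ?_⟩
    have hq_le_v : q ⊔ v ≤ v := hv (C.corestrict hpq (hpu.trans huv)) le_rfl (sup_le hqw hvw)
    exact hu hpq hpu (le_sup_left.trans hq_le_v)
  le_of_rel h := h.1
  smul_rel := by
    rintro g u v ⟨huv, h⟩
    refine ⟨TransferSystem.smul_mono' g huv, fun p q hpq hpu hqv => ?_⟩
    rw [le_smul_iff_inv_smul_le] at hpu hqv ⊢
    exact h (C.smul_rel g⁻¹ hpq) hpu hqv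
  restrict := by
    rintro u v u' ⟨-, h⟩ hu'v
    exact ⟨inf_le_right, fun p q hpq hp hq =>
      le_inf (h hpq (hp.trans inf_le_left) (hq.trans hu'v)) hq⟩

/-- `^⊠(G • (a, b))`: the pairs against which every translate of `(a, b)` has the right lifting
property. -/
def llpOrbit (a b : L) : CoTransferSystem G L where
  rel p q := p ≤ q ∧ ∀ g : G, p ≤ g • a → q ≤ g • b → q ≤ g • a
  refl _ := ⟨le_rfl, fun _ h _ => h⟩
  trans := by
    rintro p q r ⟨hpq, hp⟩ ⟨hqr, hq⟩
    exact ⟨hpq.trans hqr, fun g hpa hrb => hq g (hp g hpa (hqr.trans hrb)) hrb⟩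
  le_of_rel h := h.1
  smul_rel := by
    rintro k p q ⟨hpq, hp⟩
    refine ⟨TransferSystem.smul_mono' k hpq, fun g => ?_⟩
    simp only [smul_le_iff_le_inv_smul, smul_smul]
    exact hp (k⁻¹ * g)
  corestrict := by
    rintro p q q' ⟨hpq, hp⟩ hpq'
    refine ⟨le_sup_right, fun g hq'a hb => sup_le ?_ hq'a⟩
    exact hp g (hpq'.trans hq'a) (le_sup_left.trans hb)

variable {a b : L}

lemma rlpRel_gen_iff (hxy : x ≤ y) (hab : a ≤ b) :
    rlpRel (gen (G := G) x y) a b ↔ ∀ g : G, x ≤ g • a → y ≤ g • b → y ≤ g • a := by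
  constructor
  · intro h g
    exact ((rlp (gen x y)).smul_rel g h).2 (gen_rel_self hxy)
  · intro h
    refine ⟨hab, fun p q hpq hpa hqb => ?_⟩
    have hpq' := (gen_le (C := llpOrbit a b) ⟨hxy, h⟩ hpq).2 1
    simp only [one_smul] at hpq'
    exact hpq' hpa hqb

end CoTransferSystem

theorem gen_le_rlp_iff_general {G L : Type*} [Group G] [Lattice L]
    [MulAction G L] [CovariantClass G L (· • ·) (· ≤ ·)]
    (a b x y : L) (hab : a < b) (hxy : x < y) :
    (∀ ⦃u v : L⦄, (TransferSystem.gen (G := G) a b).rel u v →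
        rlpRel (CoTransferSystem.gen (G := G) x y) u v) ↔
      ∀ g : G, ¬ x ≤ g • a ∨ ¬ y ≤ g • b ∨ y ≤ g • a := by
  calc _ ↔ rlpRel (CoTransferSystem.gen (G := G) x y) a b :=
        TransferSystem.gen_le_iff_s7 (T := (CoTransferSystem.gen x y).rlp) hab.le
    _ ↔ ∀ g : G, x ≤ g • a → y ≤ g • b → y ≤ g • a :=
        CoTransferSystem.rlpRel_gen_iff hxy.le hab.le
    _ ↔ _ := forall_congr' fun _ => by tauto

/-- For `a < b` and `x < y` in a finite `G`-lattice,
`⌊a → b⌋ ⊆ ⌈x → y⌉^⊠` iff for every `g ∈ G`, `x ≰ g • a` or `y ≰ g • b` or `y ≤ g • a`. -/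
theorem gen_le_rlp_iff {G L : Type*} [Group G] [Finite G] [Lattice L] [Finite L]
    [MulAction G L] [CovariantClass G L (· • ·) (· ≤ ·)]
    (a b x y : L) (hab : a < b) (hxy : x < y) :
    (∀ ⦃u v : L⦄, (TransferSystem.gen (G := G) a b).rel u v →
        rlpRel (CoTransferSystem.gen (G := G) x y) u v) ↔
      ∀ g : G, ¬ x ≤ g • a ∨ ¬ y ≤ g • b ∨ y ≤ g • a :=
  gen_le_rlp_iff_general a b x y hab hxy
end
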